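/- Let N ≤ N_R be positive integers and let p(t, a) = Σ_{n=0}^∞ A_n(a) Σ_{m=0}^n binom(n,m) (−1)^m t^{N+n−m−1} e^{−t}/(N+n−m−1)! for t > 0 and a ∈ ℝ. Then for every t > 0 and a ∈ ℝ, a · ∂_a p^{(2)}(t, a) = ( −2 + N_R + (−4 + 4N + 2N_R + a − 2N·N_R − N·a)/t + (−4 + 6N + 2N_R + 2a − 3N·N_R − 3N·a + N²·N_R + N²·a − 2N²)/t² ) · p(t, a) + ( 3N − 4 + a − t + (−6 − 3N² + 9N)/t + (−4 + 8N − 5N² + N³)/t² ) · p^{(1)}(t, a) + ( −1 + 2N − N_R − a − t + (−2 − N² + 3N)/t ) · p^{(2)}(t, a), where ∂_a denotes the partial derivative with respect to a of the function a ↦ p^{(2)}(t, a). -/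

import Mathlib

/-- Pochhammer symbol `(x)ₙ = x (x+1) ⋯ (x+n-1)`. -/
noncomputable def poch (x : ℝ) (n : ℕ) : ℝ := ∏ i ∈ Finset.range n, (x + i)

/-- `A_n(a) = ((N)_n/(N_R)_n) aⁿ/n!`. -/
noncomputable def Acoef (N NR : ℕ) (a : ℝ) (n : ℕ) : ℝ :=
  (poch N n / poch NR n) * a ^ n / (n.factorial : ℝ)

/-- The (normalized) ZF SNR density
`p(t,a) = Σ_n A_n(a) Σ_{m=0}^n C(n,m) (−1)^m t^{N+n−m−1} e^{−t}/(N+n−m−1)!`. -/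
noncomputable def pdfZF (N NR : ℕ) (t a : ℝ) : ℝ :=
  ∑' n : ℕ, Acoef N NR a n *
    ∑ m ∈ Finset.range (n + 1),
      (n.choose m : ℝ) * (-1 : ℝ) ^ m * t ^ (N + n - m - 1) * Real.exp (-t)
        / ((N + n - m - 1).factorial : ℝ)

/-!
By Newton's formula the inner sum of `p` is `gₙ(t) = Δⁿφ(N-1)`, the `n`-th forward difference in
`k` of the Poisson weights `φₖ(t) = tᵏe⁻ᵗ/k!`. Since `∂ₜφₖ = -Δφ(k-1)`, the `t`-derivatives of `p`
are again series `Σ Aₙ(a) gₙ⁽ʲ⁾(t)`, and `a ∂ₐ` multiplies the `n`-th term by `n`. The identity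
`t φₖ₋₁ = k φₖ` gives a three-term recurrence for `Δⁿφ`, hence a second-order ODE in `t` for `gₙ`
and a recurrence expressing `(gₙ₊₁, gₙ₊₁')` through `(gₙ, gₙ')`. Together with the recurrence of
`Aₙ(a)` they show that the `n`-th term of the difference of the two sides is `Sₙ - Sₙ₊₁`, where
`Sₙ` is the same term with `a` replaced by `0` in the coefficients (but not in `Aₙ(a)`). As
`S₀ = 0` and `Sₙ → 0`, the series vanishes.
-/

open Real Filter Topology fwdDiff
open scoped Nat

section FwdDiff

variable {M G : Type*} [AddCommMonoid M] [AddCommGroup G]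

theorem fwdDiff_iter_succ_apply (h : M) (f : M → G) (n : ℕ) (y : M) :
    (Δ_[h])^[n + 1] f y = (Δ_[h])^[n] f (y + h) - (Δ_[h])^[n] f y := by
  rw [Function.iterate_succ_apply']
  rfl

theorem norm_fwdDiff_iter_le {E : Type*} [SeminormedAddCommGroup E] (h : M) {f : M → E}
    {B : ℝ} (hf : ∀ y, ‖f y‖ ≤ B) (n : ℕ) (y : M) : ‖(Δ_[h])^[n] f y‖ ≤ 2 ^ n * B := by
  induction n generalizing y with
  | zero => simpa using hf y
  | succ n ih =>
    rw [fwdDiff_iter_succ_apply]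
    calc _ ≤ ‖(Δ_[h])^[n] f (y + h)‖ + ‖(Δ_[h])^[n] f y‖ := norm_sub_le _ _
      _ ≤ 2 ^ (n + 1) * B := by rw [pow_succ]; linarith [ih (y + h), ih y]

theorem fwdDiff_iter_contiguous {f : ℤ → ℝ} {t : ℝ} (hf : ∀ k : ℤ, t * f (k - 1) = k * f k)
    (n : ℕ) (β : ℤ) :
    (β + n + 1) * (Δ_[1])^[n] f (β + 1)
      = (t + β) * (Δ_[1])^[n] f β - t * (Δ_[1])^[n] f (β - 1) := by
  induction n generalizing β with
  | zero =>
    have h := hf (β + 1)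
    rw [add_sub_cancel_right] at h
    push_cast at h ⊢
    simp only [Function.iterate_zero, id]
    linear_combination hf β - h
  | succ n ih =>
    have h := ih (β + 1)
    rw [add_sub_cancel_right] at h
    simp only [fwdDiff_iter_succ_apply, sub_add_cancel]
    push_cast at h ⊢
    linear_combination h - ih β

theorem hasDerivAt_fwdDiff_iter {F : ℝ → ℤ → ℝ} {t : ℝ}
    (hF : ∀ k, HasDerivAt (fun s => F s k) (-Δ_[1] (F t) (k - 1)) t) (n : ℕ) (β : ℤ) :
    HasDerivAt (fun s => (Δ_[1])^[n] (F s) β) (-(Δ_[1])^[n + 1] (F t) (β - 1)) t := by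
  induction n generalizing β with
  | zero => simpa using hF β
  | succ n ih =>
    simp only [fwdDiff_iter_succ_apply _ _ n]
    refine ((ih (β + 1)).sub (ih β)).congr_deriv ?_
    rw [add_sub_cancel_right, fwdDiff_iter_succ_apply _ _ (n + 1), sub_add_cancel]
    ring

end FwdDiff

section Poisson

noncomputable def poissonTerm (t : ℝ) : ℤ → ℝ
  | (k : ℕ) => t ^ k * exp (-t) / k !
  | Int.negSucc _ => 0

theorem poissonTerm_natCast (t : ℝ) (k : ℕ) : poissonTerm t k = t ^ k * exp (-t) / k ! := rfl

theorem poissonTerm_neg_one (t : ℝ) : poissonTerm t (-1) = 0 := rfl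

theorem poissonTerm_natCast_sub_one (t : ℝ) (k : ℕ) :
    poissonTerm t (k - 1) = k * t ^ (k - 1) * exp (-t) / k ! := by
  rcases k with _ | k
  · simp [poissonTerm_neg_one]
  · rw [Nat.cast_succ, add_sub_cancel_right, poissonTerm_natCast, Nat.factorial_succ]
    push_cast
    field_simp

theorem mul_poissonTerm_sub_one (t : ℝ) (k : ℤ) :
    t * poissonTerm t (k - 1) = k * poissonTerm t k := by
  rcases k with k | k
  · rw [Int.ofNat_eq_natCast, poissonTerm_natCast_sub_one, poissonTerm_natCast]
    rcases k with _ | k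
    · simp
    · push_cast
      ring
  · rw [show Int.negSucc k - 1 = Int.negSucc (k + 1) by omega]
    simp [poissonTerm]

theorem hasDerivAt_poissonTerm (t : ℝ) (k : ℤ) :
    HasDerivAt (fun s => poissonTerm s k) (-Δ_[1] (poissonTerm t) (k - 1)) t := by
  rw [fwdDiff, sub_add_cancel, neg_sub]
  rcases k with k | k
  · rw [Int.ofNat_eq_natCast, poissonTerm_natCast_sub_one, poissonTerm_natCast]
    refine (((hasDerivAt_pow k t).mul (hasDerivAt_neg t).exp).div_const
      (k ! : ℝ)).congr_deriv ?_
    ring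
  · rw [show Int.negSucc k - 1 = Int.negSucc (k + 1) by omega]
    simpa [poissonTerm] using hasDerivAt_const t (0 : ℝ)

theorem abs_poissonTerm_le (t : ℝ) (k : ℤ) : |poissonTerm t k| ≤ exp (2 * |t|) := by
  rcases k with k | k
  · rw [Int.ofNat_eq_natCast, poissonTerm_natCast, abs_div, abs_mul, abs_pow,
      Nat.abs_cast, abs_of_pos (exp_pos _), mul_div_right_comm, two_mul, exp_add]
    gcongr
    · exact pow_div_factorial_le_exp _ (abs_nonneg t) k
    · exact neg_le_abs t
  · simp [poissonTerm, (exp_pos _).le]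

end Poisson

section Series

theorem hasDerivAt_tsum_of_abs_le {f f' : ℕ → ℝ → ℝ} {u : ℝ → ℕ → ℝ}
    (hu : ∀ r, Summable (u r)) (hf : ∀ n y, HasDerivAt (f n) (f' n y) y)
    (hf' : ∀ r n y, |y| ≤ r → |f' n y| ≤ u r n) {x : ℝ} (hx : Summable fun n => f n x) :
    HasDerivAt (fun y => ∑' n, f n y) (∑' n, f' n x) x := by
  have hball : x ∈ Metric.ball (0 : ℝ) (|x| + 1) := by simp
  refine hasDerivAt_tsum_of_isPreconnected (hu (|x| + 1)) Metric.isOpen_ball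
    (convex_ball _ _).isPreconnected (fun n y _ => hf n y) (fun n y hy => hf' _ n y ?_) hball
    hx hball
  rw [mem_ball_zero_iff, Real.norm_eq_abs] at hy
  exact hy.le

theorem hasSum_mul_deriv_tsum_mul_pow {c : ℕ → ℝ} {K R : ℝ}
    (hc : ∀ n, |c n| ≤ K * (R ^ n / n !)) (a : ℝ) :
    HasSum (fun n => n * (c n * a ^ n)) (a * deriv (fun x => ∑' n, c n * x ^ n) a) := by
  have hsum : ∀ r, Summable fun n => K * ((2 * R * (r + 1)) ^ n / n !) :=
    fun r => (Real.summable_pow_div_factorial _).mul_left K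
  have hbound : ∀ r n y, |y| ≤ r →
      |c n * (n * y ^ (n - 1))| ≤ K * ((2 * R * (r + 1)) ^ n / n !) := by
    intro r n y hy
    have hr : 1 ≤ r + 1 := by linarith [abs_nonneg y]
    have hn : (n : ℝ) ≤ 2 ^ n := by exact_mod_cast Nat.lt_two_pow_self.le
    have hy' : |y| ^ (n - 1) ≤ (r + 1) ^ n :=
      (pow_le_pow_left₀ (abs_nonneg y) (by linarith) _).trans
        (pow_le_pow_right₀ hr (n.sub_le 1))
    calc |c n * (n * y ^ (n - 1))| = |c n| * (n * |y| ^ (n - 1)) := by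
          rw [abs_mul, abs_mul, abs_pow, Nat.abs_cast]
      _ ≤ K * (R ^ n / n !) * (2 ^ n * (r + 1) ^ n) :=
          mul_le_mul (hc n) (mul_le_mul hn hy' (by positivity) (by positivity))
            (by positivity) ((abs_nonneg _).trans (hc n))
      _ = K * ((2 * R * (r + 1)) ^ n / n !) := by rw [mul_pow, mul_pow]; ring
  have hsum_a : Summable fun n => c n * a ^ n := by
    refine .of_norm_bounded ((Real.summable_pow_div_factorial (R * |a|)).mul_left K)
      fun n => ?_
    rw [Real.norm_eq_abs, abs_mul, abs_pow, mul_pow, mul_div_right_comm, ← mul_assoc]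
    exact mul_le_mul_of_nonneg_right (hc n) (by positivity)
  have hderiv := hasDerivAt_tsum_of_abs_le hsum
    (fun n y => (hasDerivAt_pow n y).const_mul (c n)) hbound hsum_a
  rw [hderiv.deriv, ← tsum_mul_left]
  have hsum' : Summable fun n => c n * (n * a ^ (n - 1)) :=
    .of_norm_bounded (hsum |a|) fun n => hbound _ n a le_rfl
  refine (hsum'.mul_left a).hasSum.congr_fun fun n => ?_
  rcases n with _ | n
  · simp
  · rw [Nat.add_sub_cancel, pow_succ]
    ring

theorem eq_sub_of_hasSum_sub_succ {S : ℕ → ℝ} {L l : ℝ}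
    (hL : HasSum (fun n => S n - S (n + 1)) L) (hS : Tendsto S atTop (𝓝 l)) :
    L = S 0 - l := by
  refine tendsto_nhds_unique hL.tendsto_sum_nat ?_
  simp_rw [Finset.sum_range_sub']
  exact tendsto_const_nhds.sub hS

end Series

section Pochhammer

theorem poch_nonneg {x : ℝ} (hx : 0 ≤ x) (n : ℕ) : 0 ≤ poch x n :=
  Finset.prod_nonneg fun i _ => by positivity

theorem poch_pos {x : ℝ} (hx : 0 < x) (n : ℕ) : 0 < poch x n :=
  Finset.prod_pos fun i _ => by positivity

theorem poch_le_poch {x y : ℝ} (hx : 0 ≤ x) (hxy : x ≤ y) (n : ℕ) : poch x n ≤ poch y n :=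
  Finset.prod_le_prod (fun i _ => by positivity) fun i _ => by linarith

theorem poch_succ (x : ℝ) (n : ℕ) : poch x (n + 1) = poch x n * (x + n) :=
  Finset.prod_range_succ _ _

theorem abs_Acoef_le {N NR : ℕ} (hNNR : N ≤ NR) (a : ℝ) (n : ℕ) :
    |Acoef N NR a n| ≤ |a| ^ n / n ! := by
  have hN := poch_nonneg (Nat.cast_nonneg (α := ℝ) N) n
  have hNR := poch_nonneg (Nat.cast_nonneg (α := ℝ) NR) n
  have hratio : |poch N n / poch NR n| ≤ 1 := by
    rw [abs_div, abs_of_nonneg hN, abs_of_nonneg hNR]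
    exact div_le_one_of_le₀ (poch_le_poch (Nat.cast_nonneg _) (by exact_mod_cast hNNR) n) hNR
  rw [Acoef, abs_div, abs_mul, abs_pow, Nat.abs_cast]
  gcongr
  exact mul_le_of_le_one_left (by positivity) hratio

theorem Acoef_succ (N : ℕ) {NR : ℕ} (hNR : 0 < NR) (a : ℝ) (n : ℕ) :
    (NR + n) * (n + 1) * Acoef N NR a (n + 1) = (N + n) * a * Acoef N NR a n := by
  have hpos := poch_pos (Nat.cast_pos.mpr hNR : (0 : ℝ) < NR) n
  have hNRn : (NR : ℝ) + n ≠ 0 := by positivity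
  simp only [Acoef, poch_succ, Nat.factorial_succ]
  push_cast
  field_simp
  ring

theorem Acoef_eq_mul_pow (N NR : ℕ) (a : ℝ) (n : ℕ) :
    Acoef N NR a n = Acoef N NR 1 n * a ^ n := by
  simp only [Acoef, one_pow]
  ring

end Pochhammer

section ZFTerm

/-- Since `∂ₜ φₖ = -Δφ(k-1)`, each `t`-derivative raises the order of the difference by one and
lowers the base point by one. -/
noncomputable def zfTerm (N j n : ℕ) (t : ℝ) : ℝ :=
  (-1) ^ j * (Δ_[1])^[n + j] (poissonTerm t) ((N : ℤ) - 1 - j)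

theorem hasDerivAt_zfTerm (N j n : ℕ) (t : ℝ) :
    HasDerivAt (zfTerm N j n) (zfTerm N (j + 1) n t) t := by
  refine ((hasDerivAt_fwdDiff_iter (hasDerivAt_poissonTerm t) (n + j) _).const_mul
    ((-1 : ℝ) ^ j)).congr_deriv ?_
  rw [zfTerm, ← add_assoc, pow_succ,
    show (N : ℤ) - 1 - ((j + 1 : ℕ) : ℤ) = N - 1 - j - 1 by push_cast; ring]
  ring

theorem abs_zfTerm_le (N j n : ℕ) (t : ℝ) :
    |zfTerm N j n t| ≤ 2 ^ (n + j) * exp (2 * |t|) := by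
  rw [zfTerm, abs_mul, abs_pow, abs_neg, abs_one, one_pow, one_mul]
  have h := norm_fwdDiff_iter_le (1 : ℤ)
    (fun k => (Real.norm_eq_abs _).trans_le (abs_poissonTerm_le t k)) (n + j) ((N : ℤ) - 1 - j)
  rwa [Real.norm_eq_abs] at h

theorem zfTerm_ode (N n : ℕ) (t : ℝ) :
    t * zfTerm N 2 n t + (t + 2 - N) * zfTerm N 1 n t + (n + 1) * zfTerm N 0 n t = 0 := by
  have h := fwdDiff_iter_contiguous (mul_poissonTerm_sub_one t) n ((N : ℤ) - 2)
  simp only [zfTerm, fwdDiff_iter_succ_apply]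
  push_cast at h ⊢
  ring_nf at h ⊢
  linear_combination h

theorem zfTerm_zero_succ (N n : ℕ) (t : ℝ) :
    (n + N) * zfTerm N 0 (n + 1) t = -(n + 1) * zfTerm N 0 n t - t * zfTerm N 1 n t := by
  have h := fwdDiff_iter_contiguous (mul_poissonTerm_sub_one t) n ((N : ℤ) - 1)
  simp only [zfTerm, fwdDiff_iter_succ_apply]
  push_cast at h ⊢
  ring_nf at h ⊢
  linear_combination h

theorem zfTerm_one_succ (N n : ℕ) (t : ℝ) :
    (n + N) * zfTerm N 1 (n + 1) t
      = (n + 1) * zfTerm N 0 n t - (n + N - t) * zfTerm N 1 n t := by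
  have h := fwdDiff_iter_contiguous (mul_poissonTerm_sub_one t) n ((N : ℤ) - 1)
  simp only [zfTerm, fwdDiff_iter_succ_apply]
  push_cast at h ⊢
  ring_nf at h ⊢
  linear_combination -h

theorem sum_eq_zfTerm_zero {N : ℕ} (hN : 0 < N) (n : ℕ) (t : ℝ) :
    ∑ m ∈ Finset.range (n + 1), (n.choose m : ℝ) * (-1) ^ m * t ^ (N + n - m - 1) * exp (-t)
      / ((N + n - m - 1)! : ℝ) = zfTerm N 0 n t := by
  rw [zfTerm, pow_zero, one_mul, add_zero, Nat.cast_zero, sub_zero, fwdDiff_iter_eq_sum_shift,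
    ← Finset.sum_range_reflect]
  refine Finset.sum_congr rfl fun m hm => ?_
  have hmn : m ≤ n := Nat.lt_succ_iff.mp (Finset.mem_range.mp hm)
  rw [show n + 1 - 1 - m = n - m by omega, Nat.choose_symm hmn,
    show N + n - (n - m) - 1 = N + m - 1 by omega, nsmul_one,
    show (N : ℤ) - 1 + m = ((N + m - 1 : ℕ) : ℤ) by omega, poissonTerm_natCast, zsmul_eq_mul]
  push_cast
  ring

end ZFTerm

section ZFSeries

variable {N NR : ℕ}

theorem abs_Acoef_mul_zfTerm_le (hNNR : N ≤ NR) (j n : ℕ) (a t : ℝ) :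
    |Acoef N NR a n * zfTerm N j n t| ≤ 2 ^ j * exp (2 * |t|) * ((2 * |a|) ^ n / n !) := by
  rw [abs_mul]
  calc _ ≤ |a| ^ n / n ! * (2 ^ (n + j) * exp (2 * |t|)) :=
        mul_le_mul (abs_Acoef_le hNNR a n) (abs_zfTerm_le N j n t) (abs_nonneg _)
          (by positivity)
    _ = 2 ^ j * exp (2 * |t|) * ((2 * |a|) ^ n / n !) := by rw [mul_pow, pow_add]; ring

theorem summable_Acoef_mul_zfTerm (hNNR : N ≤ NR) (j : ℕ) (a t : ℝ) :
    Summable fun n => Acoef N NR a n * zfTerm N j n t :=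
  .of_norm_bounded ((Real.summable_pow_div_factorial _).mul_left _)
    fun n => abs_Acoef_mul_zfTerm_le hNNR j n a t

noncomputable def zfSeries (N NR j : ℕ) (a t : ℝ) : ℝ :=
  ∑' n, Acoef N NR a n * zfTerm N j n t

theorem pdfZF_eq_zfSeries (hN : 0 < N) (t a : ℝ) : pdfZF N NR t a = zfSeries N NR 0 a t := by
  refine tsum_congr fun n => ?_
  simp only [← sum_eq_zfTerm_zero hN, Finset.mul_sum]

theorem hasDerivAt_zfSeries (hNNR : N ≤ NR) (j : ℕ) (a t : ℝ) :
    HasDerivAt (zfSeries N NR j a) (zfSeries N NR (j + 1) a t) t := by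
  refine hasDerivAt_tsum_of_abs_le
    (u := fun r n => 2 ^ (j + 1) * exp (2 * r) * ((2 * |a|) ^ n / n !))
    (fun r => (Real.summable_pow_div_factorial _).mul_left _)
    (fun n y => (hasDerivAt_zfTerm N j n y).const_mul _) (fun r n y hy => ?_)
    (summable_Acoef_mul_zfTerm hNNR j a t)
  refine (abs_Acoef_mul_zfTerm_le hNNR (j + 1) n a y).trans ?_
  gcongr

theorem deriv_pdfZF (hN : 0 < N) (hNNR : N ≤ NR) (t a : ℝ) :
    deriv (fun t' => pdfZF N NR t' a) t = zfSeries N NR 1 a t := by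
  simp only [pdfZF_eq_zfSeries hN]
  exact (hasDerivAt_zfSeries hNNR 0 a t).deriv

theorem iteratedDeriv_two_pdfZF (hN : 0 < N) (hNNR : N ≤ NR) (t a : ℝ) :
    iteratedDeriv 2 (fun t' => pdfZF N NR t' a) t = zfSeries N NR 2 a t := by
  rw [iteratedDeriv_succ, iteratedDeriv_one, funext (deriv_pdfZF hN hNNR · a)]
  exact (hasDerivAt_zfSeries hNNR 1 a t).deriv

theorem hasSum_mul_deriv_zfSeries (hNNR : N ≤ NR) (j : ℕ) (a t : ℝ) :
    HasSum (fun n : ℕ => n * (Acoef N NR a n * zfTerm N j n t))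
      (a * deriv (fun a' => zfSeries N NR j a' t) a) := by
  have hc (n : ℕ) :
      |Acoef N NR 1 n * zfTerm N j n t| ≤ 2 ^ j * exp (2 * |t|) * (2 ^ n / n !) := by
    simpa using abs_Acoef_mul_zfTerm_le hNNR j n 1 t
  have hseries : (fun a' => zfSeries N NR j a' t)
      = fun x => ∑' n, Acoef N NR 1 n * zfTerm N j n t * x ^ n :=
    funext fun x => tsum_congr fun n => by rw [Acoef_eq_mul_pow]; ring
  rw [hseries]
  refine (hasSum_mul_deriv_tsum_mul_pow hc a).congr_fun fun n => ?_
  rw [Acoef_eq_mul_pow]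
  ring

end ZFSeries

section Telescoping

noncomputable def zfCoeff0 (N NR : ℕ) (t a : ℝ) : ℝ :=
  -2 + (NR : ℝ)
    + (-4 + 4 * (N : ℝ) + 2 * (NR : ℝ) + a - 2 * (N : ℝ) * (NR : ℝ) - (N : ℝ) * a) / t
    + (-4 + 6 * (N : ℝ) + 2 * (NR : ℝ) + 2 * a - 3 * (N : ℝ) * (NR : ℝ)
        - 3 * (N : ℝ) * a + (N : ℝ) ^ 2 * (NR : ℝ) + (N : ℝ) ^ 2 * a - 2 * (N : ℝ) ^ 2) / t ^ 2

noncomputable def zfCoeff1 (N : ℕ) (t a : ℝ) : ℝ :=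
  3 * (N : ℝ) - 4 + a - t + (-6 - 3 * (N : ℝ) ^ 2 + 9 * (N : ℝ)) / t
    + (-4 + 8 * (N : ℝ) - 5 * (N : ℝ) ^ 2 + (N : ℝ) ^ 3) / t ^ 2

noncomputable def zfCoeff2 (N NR : ℕ) (t a : ℝ) : ℝ :=
  -1 + 2 * (N : ℝ) - (NR : ℝ) - a - t + (-2 - (N : ℝ) ^ 2 + 3 * (N : ℝ)) / t

noncomputable def zfResidual (N NR n : ℕ) (t a : ℝ) : ℝ :=
  zfCoeff0 N NR t a * zfTerm N 0 n t + zfCoeff1 N t a * zfTerm N 1 n t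
    + (zfCoeff2 N NR t a - n) * zfTerm N 2 n t

theorem zfResidual_eq (N NR n : ℕ) (t a : ℝ) :
    zfResidual N NR n t a
      = zfResidual N NR n t 0 + a * (zfResidual N NR n t 1 - zfResidual N NR n t 0) := by
  simp only [zfResidual, zfCoeff0, zfCoeff1, zfCoeff2]
  ring

variable {N NR : ℕ}

theorem zfResidual_zero_zero {t : ℝ} (ht : t ≠ 0) : zfResidual N NR 0 t 0 = 0 := by
  have hode := zfTerm_ode N 0 t
  have hΦ := mul_poissonTerm_sub_one t ((N : ℤ) - 1)
  have hg1 : t * zfTerm N 1 0 t = (N - 1 - t) * zfTerm N 0 0 t := by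
    simp only [zfTerm, zero_add, fwdDiff_iter_succ_apply, Function.iterate_zero, id,
      Nat.cast_zero, Nat.cast_one, sub_zero, sub_add_cancel]
    push_cast at hΦ
    linear_combination hΦ
  simp only [zfResidual, zfCoeff0, zfCoeff1, zfCoeff2]
  push_cast at hode ⊢
  generalize zfTerm N 2 0 t = g2 at *
  generalize zfTerm N 1 0 t = g1 at *
  generalize zfTerm N 0 0 t = g0 at *
  obtain rfl : g2 = (-(t + 2 - N) * g1 - g0) / t := by
    rw [eq_div_iff ht]; linear_combination hode
  obtain rfl : g1 = (N - 1 - t) * g0 / t := by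
    rw [eq_div_iff ht]; linear_combination hg1
  field_simp
  ring

theorem zfResidual_succ_zero (hN : 0 < N) {t : ℝ} (ht : t ≠ 0) (n : ℕ) :
    (n + N) * zfResidual N NR (n + 1) t 0
      = (NR + n) * (n + 1) * (zfResidual N NR n t 0 - zfResidual N NR n t 1) := by
  have hode := zfTerm_ode N n t
  have hode' := zfTerm_ode N (n + 1) t
  have h0 := zfTerm_zero_succ N n t
  have h1 := zfTerm_one_succ N n t
  have hnN : (n : ℝ) + N ≠ 0 := by positivity
  simp only [zfResidual, zfCoeff0, zfCoeff1, zfCoeff2]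
  push_cast at hode' ⊢
  generalize zfTerm N 2 (n + 1) t = g2' at *
  generalize zfTerm N 1 (n + 1) t = g1' at *
  generalize zfTerm N 0 (n + 1) t = g0' at *
  generalize zfTerm N 2 n t = g2 at *
  generalize zfTerm N 1 n t = g1 at *
  generalize zfTerm N 0 n t = g0 at *
  obtain rfl : g2' = (-(t + 2 - N) * g1' - (n + 1 + 1) * g0') / t := by
    rw [eq_div_iff ht]; linear_combination hode'
  obtain rfl : g0' = (-(n + 1) * g0 - t * g1) / (n + N) := by
    rw [eq_div_iff hnN]; linear_combination h0
  obtain rfl : g1' = ((n + 1) * g0 - (n + N - t) * g1) / (n + N) := by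
    rw [eq_div_iff hnN]; linear_combination h1
  obtain rfl : g2 = (-(t + 2 - N) * g1 - (n + 1) * g0) / t := by
    rw [eq_div_iff ht]; linear_combination hode
  field_simp
  ring

/-- Creative telescoping: the `a`-free part of the residual is the certificate. -/
theorem Acoef_mul_zfResidual (hN : 0 < N) (hNNR : N ≤ NR) {t : ℝ} (ht : t ≠ 0) (a : ℝ)
    (n : ℕ) :
    Acoef N NR a n * zfResidual N NR n t a
      = Acoef N NR a n * zfResidual N NR n t 0
        - Acoef N NR a (n + 1) * zfResidual N NR (n + 1) t 0 := by
  have hNR : (0 : ℝ) < NR := by exact_mod_cast hN.trans_le hNNR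
  have hNRn : ((NR : ℝ) + n) * (n + 1) ≠ 0 := by positivity
  have hA := Acoef_succ N (hN.trans_le hNNR) a n
  have hR := zfResidual_succ_zero (NR := NR) hN ht n
  have key : Acoef N NR a (n + 1) * zfResidual N NR (n + 1) t 0
      = a * Acoef N NR a n * (zfResidual N NR n t 0 - zfResidual N NR n t 1) :=
    mul_left_cancel₀ hNRn (by
      linear_combination zfResidual N NR (n + 1) t 0 * hA + a * Acoef N NR a n * hR)
  rw [zfResidual_eq N NR n t a, key]
  ring

theorem hasSum_Acoef_mul_zfResidual (hNNR : N ≤ NR) (a b t : ℝ) :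
    HasSum (fun n => Acoef N NR a n * zfResidual N NR n t b)
      (zfCoeff0 N NR t b * zfSeries N NR 0 a t + zfCoeff1 N t b * zfSeries N NR 1 a t
        + zfCoeff2 N NR t b * zfSeries N NR 2 a t
        - a * deriv (fun a' => zfSeries N NR 2 a' t) a) := by
  have hsum (j : ℕ) := (summable_Acoef_mul_zfTerm hNNR j a t).hasSum
  refine (((((hsum 0).mul_left _).add ((hsum 1).mul_left _)).add ((hsum 2).mul_left _)).sub
    (hasSum_mul_deriv_zfSeries hNNR 2 a t)).congr_fun fun n => ?_
  simp only [zfResidual]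
  ring

theorem mul_deriv_zfSeries_two (hN : 0 < N) (hNNR : N ≤ NR) {t : ℝ} (ht : t ≠ 0) (a : ℝ) :
    a * deriv (fun a' => zfSeries N NR 2 a' t) a
      = zfCoeff0 N NR t a * zfSeries N NR 0 a t + zfCoeff1 N t a * zfSeries N NR 1 a t
        + zfCoeff2 N NR t a * zfSeries N NR 2 a t := by
  have hres := hasSum_Acoef_mul_zfResidual hNNR a a t
  simp only [Acoef_mul_zfResidual hN hNNR ht a] at hres
  have hlim := (hasSum_Acoef_mul_zfResidual hNNR a 0 t).summable.tendsto_atTop_zero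
  have h := eq_sub_of_hasSum_sub_succ hres hlim
  rw [zfResidual_zero_zero ht, mul_zero, sub_zero] at h
  linarith

end Telescoping

/-- For all `t > 0` and `a ∈ ℝ`, the differential equation satisfied by
`a ∂_a p⁽²⁾(t,a)`, where `p⁽¹⁾, p⁽²⁾` are partial derivatives with respect to `t`. -/
theorem stmt13 (N NR : ℕ) (hN : 0 < N) (hNNR : N ≤ NR) :
    ∀ t : ℝ, 0 < t → ∀ a : ℝ,
      a * deriv (fun a' => iteratedDeriv 2 (fun t' => pdfZF N NR t' a') t) a =
        (-2 + (NR : ℝ)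
            + (-4 + 4 * (N : ℝ) + 2 * (NR : ℝ) + a - 2 * (N : ℝ) * (NR : ℝ)
                - (N : ℝ) * a) / t
            + (-4 + 6 * (N : ℝ) + 2 * (NR : ℝ) + 2 * a - 3 * (N : ℝ) * (NR : ℝ)
                - 3 * (N : ℝ) * a + (N : ℝ) ^ 2 * (NR : ℝ) + (N : ℝ) ^ 2 * a
                - 2 * (N : ℝ) ^ 2) / t ^ 2)
            * pdfZF N NR t a
          + (3 * (N : ℝ) - 4 + a - t + (-6 - 3 * (N : ℝ) ^ 2 + 9 * (N : ℝ)) / t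
              + (-4 + 8 * (N : ℝ) - 5 * (N : ℝ) ^ 2 + (N : ℝ) ^ 3) / t ^ 2)
            * deriv (fun t' => pdfZF N NR t' a) t
          + (-1 + 2 * (N : ℝ) - (NR : ℝ) - a - t
              + (-2 - (N : ℝ) ^ 2 + 3 * (N : ℝ)) / t)
            * iteratedDeriv 2 (fun t' => pdfZF N NR t' a) t := by
  intro t ht a
  simp only [iteratedDeriv_two_pdfZF hN hNNR]
  rw [deriv_pdfZF hN hNNR, pdfZF_eq_zfSeries hN]
  exact mul_deriv_zfSeries_two hN hNNR ht.ne' a
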